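/- Let N ≥ 2, let Λ = diag(λ_0, λ_1, …, λ_{N−1}) be a real diagonal N×N matrix, let α, β be real numbers with α² + β² = 1, let p = (α, 0, …, 0, β)ᵀ ∈ ℝ^N, and let ξ ∈ ℝ. Then the multiset of eigenvalues of the Hermitian matrix Θ = Λ − ξ p pᴴ consists of λ_1, λ_2, …, λ_{N−2} together with the two roots of the quadratic equation x² − (λ_0 + λ_{N−1} − ξ)x + λ_0 λ_{N−1} − ξ(α² λ_{N−1} + β² λ_0) = 0. -/

import Mathlib

/-!
Only the entries 0 and N − 1 of p are nonzero, so Θ agrees with Λ outside the 2 × 2 principal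
block on these two indices. Hence the characteristic polynomial of Θ is that of the block
`!![λ₀ - ξα², -ξαβ; -ξαβ, λ_{N-1} - ξβ²]` times `∏ (X - λ_k)` over the interior indices. The block
is real symmetric, so its characteristic polynomial has two real roots, whose sum and product are
its trace `λ₀ + λ_{N-1} - ξ` (as α² + β² = 1) and its determinant. The eigenvalues of the
Hermitian matrix Θ are exactly the roots of its characteristic polynomial.
-/

open Matrix
open scoped ComplexOrder

noncomputable section

open Polynomial

-- The eigenvalues of `!![a, b; b, d]`: the discriminant `(a - d) ^ 2 + 4 * b ^ 2` is nonnegative.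
theorem Real.exists_add_eq_and_mul_eq_sub_sq (a d b : ℝ) :
    ∃ r₁ r₂ : ℝ, r₁ + r₂ = a + d ∧ r₁ * r₂ = a * d - b ^ 2 := by
  have hs := Real.sq_sqrt (by positivity : 0 ≤ (a - d) ^ 2 + 4 * b ^ 2)
  exact ⟨(a + d + √((a - d) ^ 2 + 4 * b ^ 2)) / 2, (a + d - √((a - d) ^ 2 + 4 * b ^ 2)) / 2,
    by ring, by linear_combination (-1 / 4 : ℝ) * hs⟩

theorem Polynomial.X_sub_C_mul_X_sub_C_sub_C_eq {R : Type*} [CommRing R] {a d b r₁ r₂ : R}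
    (hsum : r₁ + r₂ = a + d) (hprod : r₁ * r₂ = a * d - b) :
    (X - C a) * (X - C d) - C b = (X - C r₁) * (X - C r₂) := by
  have hsumC : C r₁ + C r₂ = C a + C d := by rw [← C_add, ← C_add, hsum]
  have hprodC : C r₁ * C r₂ = C a * C d - C b := by rw [← C_mul, ← C_mul, ← C_sub, hprod]
  linear_combination X * hsumC - hprodC

namespace Matrix

variable {ι R : Type*} [Fintype ι] [DecidableEq ι] [CommRing R]

def finTwoEquivPair {i j : ι} (hij : i ≠ j) : Fin 2 ≃ {k // k = i ∨ k = j} where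
  toFun := ![⟨i, .inl rfl⟩, ⟨j, .inr rfl⟩]
  invFun k := if k.1 = i then 0 else 1
  left_inv u := by fin_cases u <;> simp [hij.symm]
  right_inv := by rintro ⟨k, rfl | rfl⟩ <;> simp [hij.symm]

theorem det_toSquareBlockProp_pair (M : Matrix ι ι R) {i j : ι} (hij : i ≠ j) :
    (M.toSquareBlockProp (fun k => k = i ∨ k = j)).det = M i i * M j j - M i j * M j i := by
  rw [← det_reindex_self (finTwoEquivPair hij).symm, det_fin_two]
  rfl

theorem charpoly_eq_of_apply_eq_zero_outside_pair (M : Matrix ι ι R) {i j : ι} (hij : i ≠ j)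
    (hM : ∀ k l, k ≠ l → ¬(k = i ∨ k = j) ∨ ¬(l = i ∨ l = j) → M k l = 0) :
    M.charpoly = ((X - C (M i i)) * (X - C (M j j)) - C (M i j * M j i)) *
      ∏ k ∈ Finset.univ.filter (fun k => ¬(k = i ∨ k = j)), (X - C (M k k)) := by
  have hdiag : M.charmatrix.toSquareBlockProp (fun k => ¬(k = i ∨ k = j)) =
      diagonal (fun k : {k // ¬(k = i ∨ k = j)} => X - C (M k k)) := by
    ext k l : 1
    obtain rfl | hkl := eq_or_ne k l
    · simp [toSquareBlockProp_def]
    · rw [diagonal_apply_ne _ hkl, toSquareBlockProp_def, of_apply,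
        charmatrix_apply_ne _ _ _ (Subtype.coe_ne_coe.mpr hkl),
        hM _ _ (Subtype.coe_ne_coe.mpr hkl) (.inl k.2), map_zero, neg_zero]
  rw [charpoly, twoBlockTriangular_det _ (fun k => k = i ∨ k = j) ?_,
    det_toSquareBlockProp_pair _ hij, hdiag, det_diagonal,
    ← Finset.prod_subtype _ (fun _ => Finset.mem_filter_univ _) (fun k => X - C (M k k)),
    charmatrix_apply_eq, charmatrix_apply_eq, charmatrix_apply_ne _ _ _ hij,
    charmatrix_apply_ne _ _ _ hij.symm]
  · simp only [neg_mul_neg, C_mul]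
  · intro k hk l hl
    have hkl : k ≠ l := fun h => hk (h ▸ hl)
    rw [charmatrix_apply_ne _ _ _ hkl, hM k l hkl (.inl hk), map_zero, neg_zero]

theorem charpoly_diagonal_sub_smul_vecMulVec_of_support_pair (d u v : ι → R) (c : R) {i j : ι}
    (hij : i ≠ j) (hu : ∀ k, ¬(k = i ∨ k = j) → u k = 0) (hv : ∀ k, ¬(k = i ∨ k = j) → v k = 0) :
    (diagonal d - c • vecMulVec u v).charpoly =
      ((X - C (d i - c * (u i * v i))) * (X - C (d j - c * (u j * v j))) -
        C (c * (u i * v j) * (c * (u j * v i)))) *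
      ∏ k ∈ Finset.univ.filter (fun k => ¬(k = i ∨ k = j)), (X - C (d k)) := by
  have happly : ∀ k l, (diagonal d - c • vecMulVec u v) k l =
      (if k = l then d k else 0) - c * (u k * v l) := by
    simp [diagonal_apply, vecMulVec_apply]
  rw [charpoly_eq_of_apply_eq_zero_outside_pair _ hij]
  · simp only [happly, if_pos, if_neg hij, if_neg hij.symm, zero_sub, neg_mul_neg]
    congr 1
    refine Finset.prod_congr rfl fun k hk => ?_
    rw [hu k (Finset.mem_filter.mp hk).2, zero_mul, mul_zero, sub_zero]
  · intro k l hkl hkl'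
    rw [happly, if_neg hkl]
    rcases hkl' with hk | hl
    · rw [hu k hk, zero_mul, mul_zero, sub_zero]
    · rw [hv l hl, mul_zero, mul_zero, sub_zero]

end Matrix

theorem Matrix.IsHermitian.map_eigenvalues_eq_of_charpoly_eq {n 𝕜 : Type*} [Fintype n]
    [DecidableEq n] [RCLike 𝕜] {A : Matrix n n 𝕜} (hA : A.IsHermitian) {s : Multiset ℝ}
    (h : A.charpoly = (s.map fun x : ℝ => X - C (x : 𝕜)).prod) :
    Multiset.map hA.eigenvalues Finset.univ.val = s := by
  apply Multiset.map_injective (RCLike.ofReal_injective (K := 𝕜))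
  rw [Multiset.map_map, ← hA.roots_charpoly_eq_eigenvalues, h,
    ← roots_multiset_prod_X_sub_C (s.map ((↑) : ℝ → 𝕜)), Multiset.map_map]
  rfl

/-- For `Λ = diag(λ₀, …, λ_{N-1})`, `p = (α, 0, …, 0, β)ᵀ` with `α² + β² = 1`, the
eigenvalues of `Θ = Λ - ξ p pᴴ` (as a multiset) are `λ₁, …, λ_{N-2}` together with the
two roots (characterized via Vieta's formulas) of
`x² - (λ₀ + λ_{N-1} - ξ) x + λ₀ λ_{N-1} - ξ(α² λ_{N-1} + β² λ₀) = 0`. -/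
theorem sr1r_diagonal_spectrum {N : ℕ} (hN : 2 ≤ N)
    (lam : Fin N → ℝ) (α β : ℝ) (hαβ : α ^ 2 + β ^ 2 = 1)
    (p : Fin N → ℂ)
    (hp : p = fun i : Fin N =>
      if (i : ℕ) = 0 then (α : ℂ) else if (i : ℕ) = N - 1 then (β : ℂ) else 0)
    (ξ : ℝ)
    (Θ : Matrix (Fin N) (Fin N) ℂ)
    (hΘdef : Θ = Matrix.diagonal (fun i => (lam i : ℂ)) - (ξ : ℂ) • vecMulVec p (star p))
    (hΘ : Θ.IsHermitian) :
    ∃ r₁ r₂ : ℝ,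
      r₁ + r₂ = lam ⟨0, by omega⟩ + lam ⟨N - 1, by omega⟩ - ξ ∧
      r₁ * r₂ = lam ⟨0, by omega⟩ * lam ⟨N - 1, by omega⟩ -
        ξ * (α ^ 2 * lam ⟨N - 1, by omega⟩ + β ^ 2 * lam ⟨0, by omega⟩) ∧
      Multiset.map hΘ.eigenvalues Finset.univ.val =
        r₁ ::ₘ r₂ ::ₘ Multiset.map lam
          ((Finset.univ.filter fun i : Fin N => 0 < (i : ℕ) ∧ (i : ℕ) < N - 1)).val := by
  set i₀ : Fin N := ⟨0, by omega⟩
  set i₁ : Fin N := ⟨N - 1, by omega⟩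
  have hi₀₁ : i₀ ≠ i₁ := by simp [i₀, i₁, Fin.ext_iff]; omega
  have hp₀ : p i₀ = α := by simp [hp, i₀]
  have hp₁ : p i₁ = β := by simp [hp, i₁]; omega
  have hp_interior : ∀ k, ¬(k = i₀ ∨ k = i₁) → p k = 0 := by
    simp_all [i₀, i₁, Fin.ext_iff]
  have hinterior : (Finset.univ.filter fun k : Fin N => ¬(k = i₀ ∨ k = i₁)) =
      Finset.univ.filter fun k : Fin N => 0 < (k : ℕ) ∧ (k : ℕ) < N - 1 := by
    ext k
    simp [i₀, i₁, Fin.ext_iff]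
    omega
  obtain ⟨r₁, r₂, hsum, hprod⟩ := Real.exists_add_eq_and_mul_eq_sub_sq
    (lam i₀ - ξ * α ^ 2) (lam i₁ - ξ * β ^ 2) (ξ * α * β)
  refine ⟨r₁, r₂, by linear_combination hsum - ξ * hαβ, by linear_combination hprod,
    hΘ.map_eigenvalues_eq_of_charpoly_eq ?_⟩
  rw [hΘdef, charpoly_diagonal_sub_smul_vecMulVec_of_support_pair _ _ _ _ hi₀₁ hp_interior
    (by simpa using hp_interior)]
  simp only [Pi.star_apply, hp₀, hp₁, Complex.star_def, Complex.conj_ofReal]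
  rw [X_sub_C_mul_X_sub_C_sub_C_eq (r₁ := (r₁ : ℂ)) (r₂ := (r₂ : ℂ))]
  · rw [← hinterior]
    simp [Finset.prod_eq_multiset_prod, mul_assoc]
  · norm_cast
    linear_combination hsum
  · norm_cast
    linear_combination hprod
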